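/- arXiv:1502.04160 — 2 statements merged into one kernel-verified Lean document; each statement's English description precedes it below -/
import Mathlib

section
/- There exists a positive constant θ such that for every integer n ≥ 3 and every integer ξ with 1 ≤ ξ ≤ n/log(n), the largest eigenvalue β₁(ξ) of the matrix M(ξ) satisfies β₁(ξ) ≤ 1 − θ·(ξ/n)^{4/3}. (Here log denotes the natural logarithm.) -/
/-!
If `M(ξ) v = β v`, then `(1 - β) ‖v‖² = ∑ⱼ pⱼ vⱼ² + ¼ ∑ⱼ (vⱼ₊₁ - vⱼ)²` with the potential
`pⱼ = (1 - cos (2πξj/n)) / 2 ≥ 4 ‖ξj/n‖²`, where `‖·‖` is the distance to the nearest integer.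
The phases of two sites `L` apart differ by `Lξ/n`, so when `L s ≤ 1/2`, `s = ‖ξ/n‖`, the potential
is at least `(L s)²` at one of them; a vector concentrated where the potential is small must then
vary along the `L` steps in between, which the kinetic term charges through Cauchy–Schwarz.
Taking `L ≈ s^{-1/2}` balances the two and gives `1 - β ≥ s / 64`. For `ξ ≤ n / log n` we have
`r = ξ/n ≤ 1 / log 3 < 1`, hence `s ≥ r (1 - r) ≥ (1 - 1 / log 3) r ≥ (1 - 1 / log 3) r^{4/3}`.
-/

/-- The `n×n` real symmetric matrix `M(ξ)` with `(j,j)` entry `(1/2)·cos(2πξj/n)`,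
entries `1/4` for `k ≡ j ± 1 (mod n)` (including the corners), and `0` elsewhere. -/
noncomputable def Mmat (n : ℕ) (ξ : ℤ) : Matrix (Fin n) (Fin n) ℝ :=
  Matrix.of fun j k =>
    if k = j then (1/2) * Real.cos (2 * Real.pi * (ξ : ℝ) * ((j : ℕ) : ℝ) / (n : ℝ))
    else if ((k : ℕ) : ZMod n) = ((j : ℕ) : ZMod n) + 1 ∨
        ((k : ℕ) : ZMod n) = ((j : ℕ) : ZMod n) - 1 then 1/4
    else 0

open Real Finset Matrix

namespace UnitAddCircle

lemma norm_nsmul_eq_mul {y : UnitAddCircle} {L : ℕ} (h : L * ‖y‖ ≤ 1 / 2) :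
    ‖L • y‖ = L * ‖y‖ := by
  induction y using QuotientAddGroup.induction_on with
  | H x =>
    have hround : ((x : ℝ) : UnitAddCircle) = ((x - round x : ℝ) : UnitAddCircle) := by
      rw [AddCircle.coe_sub, eq_comm, sub_eq_self, AddCircle.coe_eq_zero_iff]
      exact ⟨round x, by simp⟩
    have hx : ‖((x - round x : ℝ) : UnitAddCircle)‖ = |x - round x| := by
      rw [AddCircle.norm_coe_eq_abs_iff (p := 1) one_ne_zero, abs_one]
      exact abs_sub_round x
    rw [hround, hx] at h ⊢
    have hL : L • ((x - round x : ℝ) : UnitAddCircle) =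
        ((L * (x - round x) : ℝ) : UnitAddCircle) := by
      rw [← AddCircle.coe_nsmul, nsmul_eq_mul]
    rw [hL, (AddCircle.norm_coe_eq_abs_iff (p := 1) one_ne_zero).2, abs_mul, Nat.abs_cast]
    simpa [abs_mul] using h

lemma mul_one_sub_le_norm_coe {r : ℝ} (h0 : 0 ≤ r) (h1 : r ≤ 1) :
    r * (1 - r) ≤ ‖(r : UnitAddCircle)‖ := by
  rw [UnitAddCircle.norm_eq]
  rcases le_or_gt (round r) 0 with hm | hm
  · have : (round r : ℝ) ≤ 0 := by exact_mod_cast hm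
    calc r * (1 - r) ≤ r := by nlinarith
      _ ≤ |r - round r| := by rw [abs_of_nonneg (by linarith)]; linarith
  · have : (1 : ℝ) ≤ round r := by exact_mod_cast hm
    calc r * (1 - r) ≤ 1 - r := by nlinarith
      _ ≤ |r - round r| := by rw [abs_sub_comm, abs_of_nonneg (by linarith)]; linarith

lemma four_mul_norm_coe_sq_le_one_sub_cos (x : ℝ) :
    4 * ‖(x : UnitAddCircle)‖ ^ 2 ≤ (1 - cos (2 * π * x)) / 2 := by
  have ht : |2 * π * (x - round x)| ≤ π := by
    rw [abs_mul, abs_of_pos two_pi_pos]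
    nlinarith [abs_sub_round x, pi_pos]
  have hcos : cos (2 * π * x) = cos (2 * π * (x - round x)) := by
    rw [mul_sub, mul_comm (2 * π) (round x : ℝ), cos_sub_int_mul_two_pi]
  have := cos_le_one_sub_mul_cos_sq ht
  rw [hcos, UnitAddCircle.norm_eq]
  field_simp at this
  nlinarith [sq_abs (x - round x), pi_pos]

end UnitAddCircle

lemma ZMod.finEquiv_apply {n : ℕ} [NeZero n] (k : Fin n) :
    ZMod.finEquiv n k = ((k : ℕ) : ZMod n) := by
  obtain ⟨m, rfl⟩ : ∃ m, n = m + 1 := Nat.exists_eq_succ_of_ne_zero (NeZero.ne n)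
  exact (Fin.cast_val_eq_self k).symm

lemma mul_sq_le_of_le_or_le {α a b x y : ℝ} (hα : 0 ≤ α) (ha : 0 ≤ a) (hb : 0 ≤ b)
    (h : α ≤ a ∨ α ≤ b) : α * x ^ 2 ≤ 2 * (a * x ^ 2 + b * y ^ 2) + 2 * α * (y - x) ^ 2 := by
  rcases h with h | h
  · nlinarith [mul_le_mul_of_nonneg_right h (sq_nonneg x), sq_nonneg y, sq_nonneg (y - x)]
  · nlinarith [mul_le_mul_of_nonneg_right h (sq_nonneg y), sq_nonneg x, sq_nonneg (x - 2 * y)]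

section CyclicPoincare

variable {G : Type*} [AddCommGroup G]

lemma sq_sub_le_mul_sum_sq_sub (x : G → ℝ) (g j : G) (L : ℕ) :
    (x (j + L • g) - x j) ^ 2 ≤ L * ∑ i ∈ range L, (x (j + i • g + g) - x (j + i • g)) ^ 2 := by
  have htel : x (j + L • g) - x j = ∑ i ∈ range L, (x (j + i • g + g) - x (j + i • g)) := by
    simp_rw [add_assoc, ← succ_nsmul]
    simpa using (Finset.sum_range_sub (fun i => x (j + i • g)) L).symm
  rw [htel]
  simpa using sq_sum_le_card_mul_sum_sq (s := range L)
    (f := fun i => x (j + i • g + g) - x (j + i • g))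

variable [Fintype G]

lemma sum_sq_sub_shift_eq (x : G → ℝ) (g : G) :
    ∑ j, (x (j + g) - x j) ^ 2 = 2 * ∑ j, x j ^ 2 - 2 * ∑ j, x j * x (j + g) := by
  have hshift : ∑ j, x (j + g) ^ 2 = ∑ j, x j ^ 2 :=
    Equiv.sum_comp (Equiv.addRight g) fun j => x j ^ 2
  calc ∑ j, (x (j + g) - x j) ^ 2 = ∑ j, (x (j + g) ^ 2 + x j ^ 2 - 2 * (x j * x (j + g))) :=
        sum_congr rfl fun j _ => by ring
    _ = 2 * ∑ j, x j ^ 2 - 2 * ∑ j, x j * x (j + g) := by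
        rw [sum_sub_distrib, sum_add_distrib, hshift, ← mul_sum]; ring

theorem mul_sum_sq_le_of_forall_le_or_le (x a : G → ℝ) (g : G) (L : ℕ) {α : ℝ} (hα : 0 ≤ α)
    (ha : ∀ j, 0 ≤ a j) (h : ∀ j, α ≤ a j ∨ α ≤ a (j + L • g)) :
    α * ∑ j, x j ^ 2 ≤
      4 * ∑ j, a j * x j ^ 2 + 2 * α * L ^ 2 * ∑ j, (x (j + g) - x j) ^ 2 := by
  have hshift : ∑ j, a (j + L • g) * x (j + L • g) ^ 2 = ∑ j, a j * x j ^ 2 :=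
    Equiv.sum_comp (Equiv.addRight (L • g)) fun j => a j * x j ^ 2
  have hinner : ∀ i : ℕ, ∑ j, (x (j + i • g + g) - x (j + i • g)) ^ 2 =
      ∑ j, (x (j + g) - x j) ^ 2 :=
    fun i => Equiv.sum_comp (Equiv.addRight (i • g)) fun j => (x (j + g) - x j) ^ 2
  calc α * ∑ j, x j ^ 2
      ≤ ∑ j, (2 * (a j * x j ^ 2 + a (j + L • g) * x (j + L • g) ^ 2)
          + 2 * α * (x (j + L • g) - x j) ^ 2) := by
        rw [mul_sum]
        exact sum_le_sum fun j _ => mul_sq_le_of_le_or_le hα (ha j) (ha _) (h j)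
    _ ≤ ∑ j, (2 * (a j * x j ^ 2 + a (j + L • g) * x (j + L • g) ^ 2)
          + 2 * α * (L * ∑ i ∈ range L, (x (j + i • g + g) - x (j + i • g)) ^ 2)) := by
        gcongr with j
        exact sq_sub_le_mul_sum_sq_sub x g j L
    _ = 4 * ∑ j, a j * x j ^ 2 + 2 * α * L ^ 2 * ∑ j, (x (j + g) - x j) ^ 2 := by
        simp only [sum_add_distrib, ← mul_sum, hshift]
        rw [sum_comm, sum_congr rfl fun i _ => hinner i, sum_const, card_range, nsmul_eq_mul]
        ring

theorem mul_sum_sq_le_sum_mul_sq_add_of_forall_le_or_le (x a : G → ℝ) (g : G) (L : ℕ)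
    {α c : ℝ} (hc : 0 ≤ c) (hcα : 4 * c ≤ α) (hcL : 8 * c * L ^ 2 ≤ 1)
    (ha : ∀ j, 0 ≤ a j) (h : ∀ j, α ≤ a j ∨ α ≤ a (j + L • g)) :
    c * ∑ j, x j ^ 2 ≤ ∑ j, a j * x j ^ 2 + 1 / 4 * ∑ j, (x (j + g) - x j) ^ 2 := by
  have hα : 0 ≤ α := by linarith
  have hP : 0 ≤ ∑ j, a j * x j ^ 2 := sum_nonneg fun j _ => mul_nonneg (ha j) (sq_nonneg _)
  have hD : 0 ≤ ∑ j, (x (j + g) - x j) ^ 2 := sum_nonneg fun j _ => sq_nonneg _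
  have hmain := mul_sum_sq_le_of_forall_le_or_le x a g L hα ha h
  rcases hα.eq_or_lt with rfl | hα
  · rw [show c = 0 by linarith, zero_mul]
    positivity
  · have : α * (c * ∑ j, x j ^ 2) ≤
        α * (∑ j, a j * x j ^ 2 + 1 / 4 * ∑ j, (x (j + g) - x j) ^ 2) := by
      nlinarith [mul_le_mul_of_nonneg_left hmain hc, mul_nonneg (sub_nonneg.2 hcα) hP,
        mul_nonneg (mul_nonneg hα.le hD) (sub_nonneg.2 hcL)]
    exact le_of_mul_le_mul_left this hα

end CyclicPoincare

lemma exists_nat_scale {s : ℝ} (hs0 : 0 ≤ s) (hs : s ≤ 1 / 2) :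
    ∃ L : ℕ, L * s ≤ 1 / 2 ∧ s ≤ 16 * (L * s) ^ 2 ∧ s * L ^ 2 ≤ 8 := by
  rcases le_or_gt (1 / 16) s with hbig | hsmall
  · exact ⟨1, by simpa using hs, by norm_num; nlinarith, by norm_num; linarith⟩
  rcases hs0.eq_or_lt with rfl | hpos
  · exact ⟨0, by norm_num⟩
  -- `L = ⌈1 / (4 √s)⌉` puts `L √s` in `[1/4, 1/2)`.
  set u := √s
  have hu : 0 < u := sqrt_pos.2 hpos
  have hsu : s = u ^ 2 := (sq_sqrt hs0).symm
  have hu4 : u < 1 / 4 := by nlinarith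
  have hr1 : 1 ≤ (4 * u)⁻¹ := one_le_inv₀ (by positivity) |>.2 (by linarith)
  have hlow := Nat.le_ceil (4 * u)⁻¹
  have hhigh := Nat.ceil_lt_add_one (by positivity : 0 ≤ (4 * u)⁻¹)
  have hru : (4 * u)⁻¹ * u = 1 / 4 := by field_simp
  set L := ⌈(4 * u)⁻¹⌉₊
  have ht1 : 1 / 4 ≤ L * u := by nlinarith
  have ht2 : L * u < 1 / 2 := by nlinarith
  have ht1' : 1 / 16 ≤ (L * u) ^ 2 := by nlinarith
  refine ⟨L, ?_, ?_, ?_⟩ <;> rw [hsu]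
  · nlinarith
  · nlinarith [mul_le_mul_of_nonneg_right ht1' (sq_nonneg u)]
  · nlinarith

noncomputable def Mmat.potential (n : ℕ) (ξ : ℤ) (j : Fin n) : ℝ :=
  (1 - cos (2 * π * ξ * (j : ℕ) / n)) / 2

lemma Mmat.potential_nonneg (n : ℕ) (ξ : ℤ) (j : Fin n) : 0 ≤ Mmat.potential n ξ j := by
  have := cos_le_one (2 * π * ξ * (j : ℕ) / n)
  unfold Mmat.potential
  linarith

section Mmat

variable {n : ℕ} [NeZero n]

open Fin.CommRing in
lemma Mmat_apply (hn : 3 ≤ n) (ξ : ℤ) (j k : Fin n) :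
    Mmat n ξ j k = (if k = j then 1 / 2 * cos (2 * π * ξ * (j : ℕ) / n) else 0)
      + (if k = j + 1 then 1 / 4 else 0) + (if k = j - 1 then 1 / 4 else 0) := by
  have hcast : ∀ i : Fin n, ((i : ℕ) : ZMod n) = ZMod.finEquiv n i :=
    fun i => (ZMod.finEquiv_apply i).symm
  have h1 : (1 : Fin n) ≠ 0 := fun h => by
    simp [Fin.ext_iff, Nat.mod_eq_of_lt (by omega : 1 < n)] at h
  have h2 : (2 : Fin n) ≠ 0 := fun h => by
    simp [Fin.ext_iff, Nat.mod_eq_of_lt (by omega : 2 < n)] at h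
  have hne1 : j + 1 ≠ j := fun h => h1 (by linear_combination h)
  have hne2 : j - 1 ≠ j := fun h => h1 (by linear_combination -h)
  have hne3 : j + 1 ≠ j - 1 := fun h => h2 (by linear_combination h)
  simp only [Mmat, Matrix.of_apply, hcast, ← map_one (ZMod.finEquiv n), ← map_add, ← map_sub,
    (ZMod.finEquiv n).injective.eq_iff]
  by_cases hkj : k = j
  · subst hkj
    simp [hne1.symm, hne2.symm]
  by_cases hk1 : k = j + 1
  · subst hk1
    simp [hne1, hne3]
  · simp [hkj, hk1]

lemma Mmat_mulVec (hn : 3 ≤ n) (ξ : ℤ) (v : Fin n → ℝ) (j : Fin n) :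
    (Mmat n ξ *ᵥ v) j = 1 / 2 * cos (2 * π * ξ * (j : ℕ) / n) * v j
      + 1 / 4 * v (j + 1) + 1 / 4 * v (j - 1) := by
  simp [Matrix.mulVec, dotProduct, Mmat_apply hn, add_mul, ite_mul, sum_add_distrib]

lemma dotProduct_Mmat_mulVec (hn : 3 ≤ n) (ξ : ℤ) (v : Fin n → ℝ) :
    v ⬝ᵥ (Mmat n ξ *ᵥ v) = ∑ j, v j ^ 2 - (∑ j : Fin n, Mmat.potential n ξ j * v j ^ 2
      + 1 / 4 * ∑ j, (v (j + 1) - v j) ^ 2) := by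
  have hback : ∑ j, v j * v (j - 1) = ∑ j, v j * v (j + 1) := by
    rw [← Equiv.sum_comp (Equiv.addRight 1)]
    simp [mul_comm]
  have hfwd : ∑ j, v j * (1 / 4 * v (j + 1)) = 1 / 4 * ∑ j, v j * v (j + 1) := by
    rw [mul_sum]; exact sum_congr rfl fun _ _ => by ring
  have hbwd : ∑ j, v j * (1 / 4 * v (j - 1)) = 1 / 4 * ∑ j, v j * v (j + 1) := by
    rw [← hback, mul_sum]; exact sum_congr rfl fun _ _ => by ring
  have hpot : ∑ j : Fin n, Mmat.potential n ξ j * v j ^ 2 =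
      1 / 2 * ∑ j, v j ^ 2 - ∑ j : Fin n, v j * (1 / 2 * cos (2 * π * ξ * (j : ℕ) / n) * v j) := by
    rw [mul_sum, ← sum_sub_distrib]
    exact sum_congr rfl fun _ _ => by unfold Mmat.potential; ring
  simp only [dotProduct, Mmat_mulVec hn, sum_sq_sub_shift_eq, mul_add, sum_add_distrib, hfwd, hbwd,
    hpot]
  ring

lemma sq_le_potential_or_sq_le_potential (ξ : ℤ) {L : ℕ}
    (hL : L * ‖((ξ / n : ℝ) : UnitAddCircle)‖ ≤ 1 / 2) (j : Fin n) :
    (L * ‖((ξ / n : ℝ) : UnitAddCircle)‖) ^ 2 ≤ Mmat.potential n ξ j ∨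
      (L * ‖((ξ / n : ℝ) : UnitAddCircle)‖) ^ 2 ≤ Mmat.potential n ξ (j + L • 1) := by
  set φ : Fin n → UnitAddCircle := fun i => ZMod.toAddCircle ((ξ : ZMod n) * ZMod.finEquiv n i)
  have hφ : ∀ i, φ i = ((ξ * (i : ℕ) / n : ℝ) : UnitAddCircle) := fun i => by
    simp only [φ, ZMod.finEquiv_apply]
    exact_mod_cast ZMod.toAddCircle_intCast (N := n) (ξ * (i : ℕ))
  have hpot : ∀ i : Fin n, 4 * ‖φ i‖ ^ 2 ≤ Mmat.potential n ξ i := fun i => by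
    rw [Mmat.potential, hφ, show 2 * π * ξ * (i : ℕ) / n = 2 * π * (ξ * (i : ℕ) / n) by ring]
    exact UnitAddCircle.four_mul_norm_coe_sq_le_one_sub_cos _
  have hdiff : φ (j + L • 1) - φ j = L • ((ξ / n : ℝ) : UnitAddCircle) := by
    simp only [φ, map_add, map_nsmul, map_one, mul_add, add_sub_cancel_left, mul_one,
      mul_smul_comm]
    exact_mod_cast congrArg (L • ·) (ZMod.toAddCircle_intCast (N := n) ξ)
  have htri : L * ‖((ξ / n : ℝ) : UnitAddCircle)‖ ≤ ‖φ (j + L • 1)‖ + ‖φ j‖ := by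
    rw [← UnitAddCircle.norm_nsmul_eq_mul hL, ← hdiff]
    exact norm_sub_le _ _
  have hδ : 0 ≤ L * ‖((ξ / n : ℝ) : UnitAddCircle)‖ := by positivity
  rcases le_total (L * ‖((ξ / n : ℝ) : UnitAddCircle)‖) (2 * ‖φ j‖) with h | h
  · exact Or.inl (by nlinarith [hpot j])
  · exact Or.inr (by nlinarith [hpot (j + L • 1)])

end Mmat

theorem norm_div_le_one_sub_of_mem_spectrum_Mmat {n : ℕ} (hn : 3 ≤ n) (ξ : ℤ) {β : ℝ}
    (hβ : β ∈ spectrum ℝ (Mmat n ξ)) : ‖((ξ / n : ℝ) : UnitAddCircle)‖ / 64 ≤ 1 - β := by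
  have : NeZero n := ⟨by omega⟩
  obtain ⟨v, hv⟩ := ((Module.End.hasEigenvalue_iff_mem_spectrum (f := toLin' (Mmat n ξ))).2
    (by rwa [Matrix.spectrum_toLin'])).exists_hasEigenvector
  have hMv : Mmat n ξ *ᵥ v = β • v := by simpa using hv.apply_eq_smul
  have hS : 0 < ∑ j, v j ^ 2 := by
    obtain ⟨j, hj⟩ := Function.ne_iff.1 hv.2
    exact sum_pos' (fun _ _ => sq_nonneg _) ⟨j, mem_univ j, sq_pos_of_ne_zero hj⟩
  have hq := dotProduct_Mmat_mulVec hn ξ v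
  have hvv : v ⬝ᵥ v = ∑ j, v j ^ 2 := by simp only [dotProduct, sq]
  rw [hMv, dotProduct_smul, smul_eq_mul, hvv] at hq
  obtain ⟨L, hLs, hsα, hsL⟩ := exists_nat_scale (norm_nonneg ((ξ / n : ℝ) : UnitAddCircle))
    (by simpa using AddCircle.norm_le_half_period (p := 1) one_ne_zero)
  have := mul_sum_sq_le_sum_mul_sq_add_of_forall_le_or_le v (Mmat.potential n ξ) 1 L
    (c := ‖((ξ / n : ℝ) : UnitAddCircle)‖ / 64) (by positivity) (by linarith) (by linarith)
    (Mmat.potential_nonneg n ξ) (sq_le_potential_or_sq_le_potential ξ hLs)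
  exact le_of_mul_le_mul_right (by linarith) hS

/-- There is a universal constant `θ > 0` such that for every `n ≥ 3` and
`1 ≤ ξ ≤ n / log n`, the largest eigenvalue of `M(ξ)` is at most
`1 - θ·(ξ/n)^{4/3}`; equivalently, every eigenvalue `β` of `M(ξ)` satisfies
`β ≤ 1 - θ·(ξ/n)^{4/3}`. -/
theorem Mmat_top_eigenvalue_bound_small_xi :
    ∃ θ : ℝ, 0 < θ ∧
      ∀ n : ℕ, 3 ≤ n → ∀ ξ : ℕ, 1 ≤ ξ → (ξ : ℝ) ≤ (n : ℝ) / Real.log n →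
        ∀ β ∈ spectrum ℝ (Mmat n (ξ : ℤ)),
          β ≤ 1 - θ * ((ξ : ℝ) / (n : ℝ)) ^ ((4 : ℝ) / 3) := by
  have hlog3 : 1 < log 3 := by
    rw [lt_log_iff_exp_lt (by norm_num)]
    linarith [exp_one_lt_d9]
  have hlog3_inv : (log 3)⁻¹ < 1 := inv_lt_one_of_one_lt₀ hlog3
  refine ⟨(1 - (log 3)⁻¹) / 64, by linarith, fun n hn ξ _ hξn β hβ => ?_⟩
  set r : ℝ := ξ / n with hr
  have hr0 : 0 ≤ r := by positivity
  have hr1 : r ≤ (log 3)⁻¹ := by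
    have hlogn : log 3 ≤ log n := log_le_log (by norm_num) (by exact_mod_cast hn)
    rw [hr, div_le_iff₀ (by positivity)]
    calc (ξ : ℝ) ≤ n / log n := hξn
      _ ≤ n / log 3 := div_le_div_of_nonneg_left (by positivity) (by linarith) hlogn
      _ = (log 3)⁻¹ * n := by ring
  have hgap := norm_div_le_one_sub_of_mem_spectrum_Mmat hn ξ hβ
  rw [Int.cast_natCast, ← hr] at hgap
  have hcirc := UnitAddCircle.mul_one_sub_le_norm_coe hr0 (by linarith)
  have hpow : r ^ ((4 : ℝ) / 3) ≤ r := rpow_le_self_of_le_one hr0 (by linarith) (by norm_num)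
  have hθ : (1 - (log 3)⁻¹) / 64 * r ^ ((4 : ℝ) / 3) ≤ ‖(r : UnitAddCircle)‖ / 64 :=
    calc (1 - (log 3)⁻¹) / 64 * r ^ ((4 : ℝ) / 3) ≤ (1 - r) / 64 * r :=
          mul_le_mul (by linarith) hpow (by positivity) (by linarith)
      _ ≤ ‖(r : UnitAddCircle)‖ / 64 := by linarith
  linarith
end

section
/- There exists a positive constant θ such that for every odd integer n ≥ 3 and every integer ξ with 1 ≤ ξ ≤ n/log(n), the smallest eigenvalue β_*(ξ) of the matrix M(ξ) satisfies β_*(ξ) ≥ −1 + θ·(ξ/n)^{4/3}. (Here log denotes the natural logarithm.) -/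
open Real Finset

namespace MmatAux

lemma sum_shift_one {n : ℕ} (F : ℕ → ℝ) (hF : ∀ j, F (j + n) = F j) :
    ∑ j ∈ range n, F (j + 1) = ∑ j ∈ range n, F j := by
  rcases Nat.eq_zero_or_pos n with h | h
  · simp [h]
  have h1 : ∑ j ∈ Finset.Ico 1 (n + 1), F j = ∑ j ∈ range n, F (j + 1) := by
    rw [Finset.sum_Ico_eq_sum_range]
    simp only [Nat.add_sub_cancel]
    exact Finset.sum_congr rfl fun j _ => by rw [add_comm]
  rw [← h1, Finset.sum_Ico_succ_top (by omega), Finset.range_eq_Ico,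
    Finset.sum_eq_sum_Ico_succ_bot h]
  have h0 : F n = F 0 := by simpa using hF 0
  rw [h0]; ring


lemma sum_shift {n : ℕ} : ∀ (r : ℕ) (F : ℕ → ℝ), (∀ j, F (j + n) = F j) →
    ∑ j ∈ range n, F (j + r) = ∑ j ∈ range n, F j
  | 0, F, _ => by simp
  | r+1, F, hF => by
    have step1 : ∑ j ∈ range n, F (j + (r + 1)) = ∑ j ∈ range n, (fun i => F (i + 1)) (j + r) :=
      Finset.sum_congr rfl fun j _ => by simp only []; rw [Nat.add_assoc]
    have hF' : ∀ j, (fun i => F (i + 1)) (j + n) = (fun i => F (i + 1)) j := fun j => by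
      simp only []
      rw [Nat.add_right_comm]; exact hF (j + 1)
    rw [step1]
    exact (sum_shift r _ hF').trans (sum_shift_one F hF)


lemma chain (x : ℕ → ℝ) (j : ℕ) : ∀ m : ℕ,
    |x j| ≤ |x (j + m)| + ∑ r ∈ range m, |x (j + r) + x (j + r + 1)|
  | 0 => by simp
  | m+1 => by
    have ih := chain x j m
    have h1 : |x (j + m)| ≤ |x (j + (m+1))| + |x (j + m) + x (j + m + 1)| := by
      have : x (j + m) = (x (j + m) + x (j + m + 1)) - x (j + (m+1)) := by
        rw [show j + (m+1) = j + m + 1 from rfl]; ring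
      calc |x (j + m)| = |(x (j + m) + x (j + m + 1)) - x (j + (m+1))| := by rw [← this]
        _ ≤ |x (j + m) + x (j + m + 1)| + |x (j + (m+1))| := abs_sub _ _
        _ = |x (j + (m+1))| + |x (j + m) + x (j + m + 1)| := by ring
    calc |x j| ≤ |x (j + m)| + ∑ r ∈ range m, |x (j + r) + x (j + r + 1)| := ih
      _ ≤ |x (j + (m+1))| + |x (j + m) + x (j + m + 1)|
          + ∑ r ∈ range m, |x (j + r) + x (j + r + 1)| := by linarith
      _ = |x (j + (m+1))| + ∑ r ∈ range (m+1), |x (j + r) + x (j + r + 1)| := by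
          rw [Finset.sum_range_succ]; ring


lemma alt (x : ℕ → ℝ) (j : ℕ) : ∀ m : ℕ,
    |x (j + m) - (-1 : ℝ) ^ m * x j| ≤ ∑ r ∈ range m, |x (j + r) + x (j + r + 1)|
  | 0 => by simp
  | m+1 => by
    have ih := alt x j m
    have key : x (j + (m+1)) - (-1:ℝ)^(m+1) * x j
        = (x (j + m) + x (j + m + 1)) - (x (j + m) - (-1:ℝ)^m * x j) := by
      rw [show j + (m+1) = j + m + 1 from rfl]; ring
    calc |x (j + (m+1)) - (-1:ℝ)^(m+1) * x j|
        = |(x (j + m) + x (j + m + 1)) - (x (j + m) - (-1:ℝ)^m * x j)| := by rw [key]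
      _ ≤ |x (j + m) + x (j + m + 1)| + |x (j + m) - (-1:ℝ)^m * x j| := abs_sub _ _
      _ ≤ |x (j + m) + x (j + m + 1)| + ∑ r ∈ range m, |x (j + r) + x (j + r + 1)| := by linarith
      _ = ∑ r ∈ range (m+1), |x (j + r) + x (j + r + 1)| := by rw [Finset.sum_range_succ]; ring


lemma three_point (u g : ℝ) (hg0 : 0 ≤ g) (hg : g ≤ 1/2) :
    4 * g^2 ≤ Real.cos u ^ 2 + Real.cos (u + π * g) ^ 2 + Real.cos (u + 2 * (π * g)) ^ 2 := by
  have hdiff : Real.cos u - Real.cos (u + 2 * (π * g))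
      = 2 * Real.sin (u + π * g) * Real.sin (π * g) := by
    rw [Real.cos_sub_cos]
    have e1 : (u + (u + 2 * (π * g))) / 2 = u + π * g := by ring
    have e2 : (u - (u + 2 * (π * g))) / 2 = -(π * g) := by ring
    rw [e1, e2, Real.sin_neg]; ring
  have hK : 2 * g ≤ Real.sin (π * g) := by
    have h1 : 0 ≤ π * g := by positivity
    have h2 : π * g ≤ π / 2 := by nlinarith [Real.pi_pos]
    have := Real.mul_le_sin h1 h2
    have hπ : (π:ℝ) ≠ 0 := ne_of_gt Real.pi_pos
    calc 2 * g = 2 / π * (π * g) := by field_simp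
      _ ≤ Real.sin (π * g) := this
  set a := Real.cos u
  set c := Real.cos (u + 2 * (π * g))
  set s := Real.sin (u + π * g)
  set K := Real.sin (π * g)
  have hpyth : s ^ 2 + Real.cos (u + π * g) ^ 2 = 1 := Real.sin_sq_add_cos_sq _
  have hs1 : s ^ 2 ≤ 1 := by nlinarith [sq_nonneg (Real.cos (u + π * g))]
  have h1 : 0 ≤ (1 - 4 * g^2) * (1 - s^2) := mul_nonneg (by nlinarith) (by nlinarith)
  have hKg : (2*g)^2 ≤ K^2 := pow_le_pow_left₀ (by linarith) hK 2
  have h2 : 0 ≤ s^2 * (K^2 - 4 * g^2) := mul_nonneg (sq_nonneg s) (by nlinarith)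
  have hd2 : (a - c)^2 = 4 * (s^2 * K^2) := by rw [hdiff]; ring
  have hac : 2 * (s^2 * K^2) ≤ a^2 + c^2 := by nlinarith [sq_nonneg (a + c), hd2]
  nlinarith [h1, h2, hac, hpyth]


/-- Cauchy–Schwarz for the window sums. -/
lemma window_sq (x : ℕ → ℝ) (j m w : ℕ) (hmw : m ≤ w) :
    (∑ r ∈ range m, |x (j + r) + x (j + r + 1)|) ^ 2
      ≤ (w:ℝ) * ∑ r ∈ range w, (x (j + r) + x (j + r + 1)) ^ 2 := by
  have h1 : (∑ r ∈ range m, |x (j + r) + x (j + r + 1)|)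
      ≤ ∑ r ∈ range w, |x (j + r) + x (j + r + 1)| :=
    Finset.sum_le_sum_of_subset_of_nonneg (Finset.range_subset_range.mpr hmw)
      (fun _ _ _ => abs_nonneg _)
  have h0 : 0 ≤ ∑ r ∈ range m, |x (j + r) + x (j + r + 1)| :=
    Finset.sum_nonneg fun _ _ => abs_nonneg _
  calc (∑ r ∈ range m, |x (j + r) + x (j + r + 1)|) ^ 2
      ≤ (∑ r ∈ range w, |x (j + r) + x (j + r + 1)|) ^ 2 := by
        exact pow_le_pow_left₀ h0 h1 2
    _ ≤ (range w).card * ∑ r ∈ range w, |x (j + r) + x (j + r + 1)| ^ 2 :=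
        sq_sum_le_card_mul_sum_sq
    _ = (w:ℝ) * ∑ r ∈ range w, (x (j + r) + x (j + r + 1)) ^ 2 := by
        rw [Finset.card_range]
        congr 1
        exact Finset.sum_congr rfl fun r _ => sq_abs _


/-- The odd-cycle (large `t`) bound. -/
lemma odd_case {n : ℕ} (hodd : Odd n) (x : ℕ → ℝ) (hx : ∀ j, x (j + n) = x j) :
    ∑ j ∈ range n, x j ^ 2
      ≤ (n:ℝ)^2 * ((1/4) * ∑ j ∈ range n, (x j + x (j + 1)) ^ 2) := by
  have key : ∀ j, 4 * x j ^ 2 ≤ (n:ℝ) * ∑ r ∈ range n, (x (j + r) + x (j + r + 1)) ^ 2 := by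
    intro j
    have h1 := alt x j n
    rw [hx j, hodd.neg_one_pow] at h1
    have h2 : |x j - (-1) * x j| = 2 * |x j| := by
      rw [show x j - (-1) * x j = 2 * x j by ring, abs_mul]; norm_num
    rw [h2] at h1
    have h3 := window_sq x j n n le_rfl
    have h4 : (2 * |x j|) ^ 2 ≤ (∑ r ∈ range n, |x (j + r) + x (j + r + 1)|) ^ 2 :=
      pow_le_pow_left₀ (by positivity) h1 2
    have h5 : (2 * |x j|) ^ 2 = 4 * x j ^ 2 := by rw [mul_pow, sq_abs]; norm_num
    linarith
  have hsum := Finset.sum_le_sum (fun j (_ : j ∈ range n) => key j)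
  have hswap : ∑ j ∈ range n, ∑ r ∈ range n, (x (j + r) + x (j + r + 1)) ^ 2
      = (n:ℝ) * ∑ j ∈ range n, (x j + x (j + 1)) ^ 2 := by
    rw [Finset.sum_comm]
    have : ∀ r ∈ range n, ∑ j ∈ range n, (x (j + r) + x (j + r + 1)) ^ 2
        = ∑ j ∈ range n, (x j + x (j + 1)) ^ 2 := by
      intro r _
      refine sum_shift r (fun i => (x i + x (i + 1)) ^ 2) (fun i => ?_)
      show (x (i + n) + x (i + n + 1)) ^ 2 = (x i + x (i + 1)) ^ 2
      rw [show i + n + 1 = i + 1 + n by ring, hx, hx]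
    rw [Finset.sum_congr rfl this, Finset.sum_const, Finset.card_range, nsmul_eq_mul]
  have h6 : ∑ j ∈ range n, 4 * x j ^ 2
      ≤ ∑ j ∈ range n, (n:ℝ) * ∑ r ∈ range n, (x (j + r) + x (j + r + 1)) ^ 2 := hsum
  rw [← Finset.mul_sum, ← Finset.mul_sum, hswap] at h6
  nlinarith [h6]


set_option maxHeartbeats 1000000 in
lemma small_case {n : ℕ} (x : ℕ → ℝ) (hx : ∀ j, x (j + n) = x j)
    {t : ℝ} (ht0 : 0 < t) (ht : t ≤ 1/8)
    (V : ℕ → ℝ) (hV : ∀ j : ℕ, V j = Real.cos (π * (t * j)) ^ 2)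
    (hVp : ∀ j, V (j + n) = V j) :
    ∑ j ∈ range n, x j ^ 2
      ≤ 64 * t ^ (-(4:ℝ)/3) * (∑ j ∈ range n, V j * x j ^ 2
          + (1/4) * ∑ j ∈ range n, (x j + x (j + 1)) ^ 2) := by
  set T : ℝ := t ^ (-(2:ℝ)/3) with hTdef
  set δ : ℝ := t ^ ((2:ℝ)/3) with hδdef
  have hT0 : 0 < T := Real.rpow_pos_of_pos ht0 _
  have hδ0 : 0 < δ := Real.rpow_pos_of_pos ht0 _
  have ht13 : 0 < t ^ ((1:ℝ)/3) := Real.rpow_pos_of_pos ht0 _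
  -- basic rpow identities
  have hδT : δ * T = 1 := by
    rw [hδdef, hTdef, ← Real.rpow_add ht0]; norm_num
  have htT : t * T = t ^ ((1:ℝ)/3) := by
    rw [hTdef]
    nth_rewrite 1 [show t = t ^ (1:ℝ) from (Real.rpow_one t).symm]
    rw [← Real.rpow_add ht0]; norm_num
  have hsq13 : (t ^ ((1:ℝ)/3)) ^ 2 = δ := by
    rw [hδdef, ← Real.rpow_natCast (t ^ ((1:ℝ)/3)) 2, ← Real.rpow_mul ht0.le]
    norm_num
  have hT2 : T ^ 2 = t ^ (-(4:ℝ)/3) := by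
    rw [hTdef, ← Real.rpow_natCast (t ^ (-(2:ℝ)/3)) 2, ← Real.rpow_mul ht0.le]
    norm_num
  have hδT2 : δ * T ^ 2 = T := by
    rw [hT2, hδdef, hTdef, ← Real.rpow_add ht0]; norm_num
  have h13 : t ^ ((1:ℝ)/3) ≤ 1/2 := by
    have h1 : t ^ ((1:ℝ)/3) ≤ (1/8 : ℝ) ^ ((1:ℝ)/3) :=
      Real.rpow_le_rpow ht0.le ht (by norm_num)
    have h2 : (1/8 : ℝ) ^ ((1:ℝ)/3) = 1/2 := by
      rw [show (1/8 : ℝ) = (1/2) ^ (3:ℕ) by norm_num,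
        ← Real.rpow_natCast ((1:ℝ)/2) 3, ← Real.rpow_mul (by norm_num)]
      norm_num
    linarith
  have hδ14 : δ ≤ 1/4 := by
    have := hsq13
    nlinarith [ht13, h13]
  have hT4 : (4:ℝ) ≤ T := by nlinarith [hδT, hδ14, hδ0]
  -- the scale h
  set h : ℕ := ⌈T/2⌉₊ with hhdef
  have hhL : T/2 ≤ (h:ℝ) := Nat.le_ceil _
  have hhU : (h:ℝ) ≤ T := by
    have := Nat.ceil_lt_add_one (show (0:ℝ) ≤ T/2 by positivity)
    have : (h:ℝ) < T/2 + 1 := this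
    linarith
  have hh0 : (0:ℝ) ≤ (h:ℝ) := by positivity
  set g : ℝ := t * (h:ℝ) with hgdef
  have hg0 : 0 ≤ g := by positivity
  have hgU : g ≤ 1/2 := by
    have : g ≤ t * T := by
      rw [hgdef]; exact mul_le_mul_of_nonneg_left hhU ht0.le
    rw [htT] at this; linarith
  have hgL : t ^ ((1:ℝ)/3) / 2 ≤ g := by
    have : t * (T/2) ≤ g := by
      rw [hgdef]; exact mul_le_mul_of_nonneg_left hhL ht0.le
    calc t ^ ((1:ℝ)/3) / 2 = t * T / 2 := by rw [htT]
      _ = t * (T/2) := by ring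
      _ ≤ g := this
  have hδg : δ ≤ 4 * g ^ 2 := by
    have h1 : (t ^ ((1:ℝ)/3) / 2) ^ 2 ≤ g ^ 2 := pow_le_pow_left₀ (by positivity) hgL 2
    nlinarith [hsq13]
  -- nonnegativity of V
  have hV0 : ∀ j, 0 ≤ V j := fun j => by rw [hV]; positivity
  -- three-point bound for the potential
  have h3V : ∀ j : ℕ, δ ≤ V j + V (j + h) + V (j + 2*h) := by
    intro j
    have h3 := three_point (π * (t * j)) g hg0 hgU
    rw [hV j, hV (j + h), hV (j + 2*h)]
    have e1 : π * (t * ((j + h : ℕ) : ℝ)) = π * (t * j) + π * g := by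
      push_cast; rw [hgdef]; ring
    have e2 : π * (t * ((j + 2*h : ℕ) : ℝ)) = π * (t * j) + 2 * (π * g) := by
      push_cast; rw [hgdef]; ring
    rw [e1, e2]
    linarith
  -- per-site estimate
  have key : ∀ j : ℕ, δ * x j ^ 2
      ≤ 6 * (V j * x j ^ 2 + V (j + h) * x (j + h) ^ 2 + V (j + 2*h) * x (j + 2*h) ^ 2)
        + 8 * (h:ℝ) * (δ * ∑ r ∈ range (2*h), (x (j + r) + x (j + r + 1)) ^ 2) := by
    intro j
    set W : ℝ := ∑ r ∈ range (2*h), (x (j + r) + x (j + r + 1)) ^ 2 with hWdef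
    have hW0 : 0 ≤ W := Finset.sum_nonneg fun r _ => sq_nonneg _
    have hn1 : 0 ≤ V j * x j ^ 2 := mul_nonneg (hV0 _) (sq_nonneg _)
    have hn2 : 0 ≤ V (j + h) * x (j + h) ^ 2 := mul_nonneg (hV0 _) (sq_nonneg _)
    have hn3 : 0 ≤ V (j + 2*h) * x (j + 2*h) ^ 2 := mul_nonneg (hV0 _) (sq_nonneg _)
    have hδW : 0 ≤ 8 * (h:ℝ) * (δ * W) := by positivity
    have h3 := h3V j
    have sqle : ∀ X A B C : ℝ, 0 ≤ A → 0 ≤ B → |X| ≤ A + B → B^2 ≤ C →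
        X^2 ≤ 2*A^2 + 2*C := by
      intro X A B C hA hB hXB hBC
      nlinarith [sq_abs X, sq_nonneg (A - B), pow_le_pow_left₀ (abs_nonneg X) hXB 2]
    -- case analysis on which potential is big
    by_cases c1 : δ/3 ≤ V j
    · have h1 : δ/3 * x j ^ 2 ≤ V j * x j ^ 2 :=
        mul_le_mul_of_nonneg_right c1 (sq_nonneg _)
      linarith
    · by_cases c2 : δ/3 ≤ V (j + h)
      · -- chain to j + h
        have hch := chain x j h
        have hcs := window_sq x j h (2*h) (by omega)
        have hB0 : 0 ≤ ∑ r ∈ range h, |x (j + r) + x (j + r + 1)| :=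
          Finset.sum_nonneg fun r _ => abs_nonneg _
        have hsq : x j ^ 2 ≤ 2 * x (j + h) ^ 2 + 2 * (((2*h:ℕ):ℝ) * W) := by
          have := sqle (x j) (|x (j + h)|)
            (∑ r ∈ range h, |x (j + r) + x (j + r + 1)|) (((2*h:ℕ):ℝ) * W)
            (abs_nonneg _) hB0 hch hcs
          rwa [sq_abs] at this
        have h1 : δ/3 * x (j + h) ^ 2 ≤ V (j + h) * x (j + h) ^ 2 :=
          mul_le_mul_of_nonneg_right c2 (sq_nonneg _)
        have h7 : δ * x j ^ 2 ≤ δ * (2 * x (j + h) ^ 2 + 2 * (((2*h:ℕ):ℝ) * W)) :=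
          mul_le_mul_of_nonneg_left hsq hδ0.le
        have h8 : δ * (2 * x (j + h) ^ 2 + 2 * (((2*h:ℕ):ℝ) * W))
            = 2 * (δ * x (j + h) ^ 2) + 4 * ((h:ℝ) * (δ * W)) := by push_cast; ring
        rw [h8] at h7
        nlinarith [h7, h1]
      · -- chain to j + 2h
        have c3 : δ/3 ≤ V (j + 2*h) := by linarith
        have hch := chain x j (2*h)
        have hcs := window_sq x j (2*h) (2*h) le_rfl
        have hB0 : 0 ≤ ∑ r ∈ range (2*h), |x (j + r) + x (j + r + 1)| :=
          Finset.sum_nonneg fun r _ => abs_nonneg _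
        have hsq : x j ^ 2 ≤ 2 * x (j + 2*h) ^ 2 + 2 * (((2*h:ℕ):ℝ) * W) := by
          have := sqle (x j) (|x (j + 2*h)|)
            (∑ r ∈ range (2*h), |x (j + r) + x (j + r + 1)|) (((2*h:ℕ):ℝ) * W)
            (abs_nonneg _) hB0 hch hcs
          rwa [sq_abs] at this
        have h1 : δ/3 * x (j + 2*h) ^ 2 ≤ V (j + 2*h) * x (j + 2*h) ^ 2 :=
          mul_le_mul_of_nonneg_right c3 (sq_nonneg _)
        have h7 : δ * x j ^ 2 ≤ δ * (2 * x (j + 2*h) ^ 2 + 2 * (((2*h:ℕ):ℝ) * W)) :=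
          mul_le_mul_of_nonneg_left hsq hδ0.le
        have h8 : δ * (2 * x (j + 2*h) ^ 2 + 2 * (((2*h:ℕ):ℝ) * W))
            = 2 * (δ * x (j + 2*h) ^ 2) + 4 * ((h:ℝ) * (δ * W)) := by push_cast; ring
        rw [h8] at h7
        nlinarith [h7, h1]
  -- sum the per-site estimate
  set N : ℝ := ∑ j ∈ range n, x j ^ 2 with hNdef
  set P : ℝ := ∑ j ∈ range n, V j * x j ^ 2 with hPdef
  set D : ℝ := ∑ j ∈ range n, (x j + x (j + 1)) ^ 2 with hDdef
  have hP0 : 0 ≤ P := Finset.sum_nonneg fun j _ => mul_nonneg (hV0 _) (sq_nonneg _)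
  have hD0 : 0 ≤ D := Finset.sum_nonneg fun j _ => sq_nonneg _
  have hVxper : ∀ j, (fun i => V i * x i ^ 2) (j + n) = (fun i => V i * x i ^ 2) j := by
    intro j; show V (j + n) * x (j + n) ^ 2 = V j * x j ^ 2; rw [hVp, hx]
  have hdper : ∀ j, (fun i => (x i + x (i + 1)) ^ 2) (j + n) = (fun i => (x i + x (i + 1)) ^ 2) j := by
    intro j; show (x (j + n) + x (j + n + 1)) ^ 2 = (x j + x (j + 1)) ^ 2
    rw [show j + n + 1 = j + 1 + n by ring, hx, hx]
  have hshifth : ∑ j ∈ range n, V (j + h) * x (j + h) ^ 2 = P :=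
    sum_shift h (fun i => V i * x i ^ 2) hVxper
  have hshift2h : ∑ j ∈ range n, V (j + 2*h) * x (j + 2*h) ^ 2 = P :=
    sum_shift (2*h) (fun i => V i * x i ^ 2) hVxper
  have hwin : ∑ j ∈ range n, ∑ r ∈ range (2*h), (x (j + r) + x (j + r + 1)) ^ 2
      = (2*h : ℕ) * D := by
    rw [Finset.sum_comm]
    have : ∀ r ∈ range (2*h), ∑ j ∈ range n, (x (j + r) + x (j + r + 1)) ^ 2 = D :=
      fun r _ => sum_shift r (fun i => (x i + x (i + 1)) ^ 2) hdper
    rw [Finset.sum_congr rfl this, Finset.sum_const, Finset.card_range, nsmul_eq_mul]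
  have hsum := Finset.sum_le_sum (fun j (_ : j ∈ range n) => key j)
  have hL : ∑ j ∈ range n, δ * x j ^ 2 = δ * N := by rw [hNdef, Finset.mul_sum]
  have hR : ∑ j ∈ range n,
      (6 * (V j * x j ^ 2 + V (j + h) * x (j + h) ^ 2 + V (j + 2*h) * x (j + 2*h) ^ 2)
        + 8 * (h:ℝ) * (δ * ∑ r ∈ range (2*h), (x (j + r) + x (j + r + 1)) ^ 2))
      = 18 * P + 16 * (h:ℝ)^2 * δ * D := by
    rw [Finset.sum_add_distrib]
    have e1 : ∑ j ∈ range n,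
        6 * (V j * x j ^ 2 + V (j + h) * x (j + h) ^ 2 + V (j + 2*h) * x (j + 2*h) ^ 2)
        = 18 * P := by
      rw [← Finset.mul_sum, Finset.sum_add_distrib, Finset.sum_add_distrib,
        hshifth, hshift2h, ← hPdef]
      ring
    have e2 : ∑ j ∈ range n,
        8 * (h:ℝ) * (δ * ∑ r ∈ range (2*h), (x (j + r) + x (j + r + 1)) ^ 2)
        = 16 * (h:ℝ)^2 * δ * D := by
      rw [← Finset.mul_sum, ← Finset.mul_sum, hwin]
      push_cast; ring
    rw [e1, e2]
  rw [hL, hR] at hsum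
  -- conclude
  have hh2 : (h:ℝ)^2 ≤ T^2 := pow_le_pow_left₀ hh0 hhU 2
  have hgoal : δ * N ≤ δ * (64 * t ^ (-(4:ℝ)/3) * (P + 1/4 * D)) := by
    have e3 : δ * (64 * t ^ (-(4:ℝ)/3) * (P + 1/4 * D)) = 64 * T * P + 16 * T * D := by
      rw [← hT2]
      have : δ * (64 * T^2 * (P + 1/4 * D)) = 64 * (δ * T^2) * P + 16 * (δ * T^2) * D := by ring
      rw [this, hδT2]
    rw [e3]
    have e4 : 18 * P ≤ 64 * T * P := by nlinarith [hP0, hT4]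
    have e5 : 16 * (h:ℝ)^2 * δ * D ≤ 16 * T * D := by
      have : 16 * (h:ℝ)^2 * δ * D ≤ 16 * T^2 * δ * D := by
        nlinarith [mul_le_mul_of_nonneg_right hh2 (mul_nonneg hδ0.le hD0)]
      have e6 : 16 * T^2 * δ * D = 16 * T * D := by
        rw [show 16 * T^2 * δ * D = 16 * (δ * T^2) * D by ring, hδT2]
      linarith
    linarith
  exact le_of_mul_le_mul_left (by linarith [hgoal]) hδ0


set_option maxHeartbeats 1000000 in
lemma form_eq {n : ℕ} (hn3 : 3 ≤ n) (hodd : Odd n) (ξ : ℕ) (v : Fin n → ℝ)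
    (x : ℕ → ℝ) (hxv : ∀ m : ℕ, x m = v ⟨m % n, Nat.mod_lt _ (by omega)⟩) :
    ∑ j : Fin n, ∑ k : Fin n, Mmat n (ξ:ℤ) j k * (v j * v k)
        + ∑ j ∈ range n, x j ^ 2
      = ∑ j ∈ range n, Real.cos (π * ξ * j / n) ^ 2 * x j ^ 2
        + (1/4) * ∑ j ∈ range n, (x j + x (j + 1)) ^ 2 := by
  haveI : NeZero n := ⟨by omega⟩
  have hn0 : 0 < n := by omega
  -- basic facts about x
  have hxp : ∀ m, x (m + n) = x m := by
    intro m; rw [hxv, hxv]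
    congr 1
    exact Fin.ext (by simp [Nat.add_mod_right])
  have hxj : ∀ j : Fin n, x (j : ℕ) = v j := by
    intro j; rw [hxv]
    congr 1
    exact Fin.ext (by simp [Nat.mod_eq_of_lt j.isLt])
  -- the neighbor indices
  have hinj : ∀ k k' : Fin n, ((k:ℕ):ZMod n) = ((k':ℕ):ZMod n) → k = k' := by
    intro k k' hkk
    have := congrArg ZMod.val hkk
    rw [ZMod.val_cast_of_lt k.isLt, ZMod.val_cast_of_lt k'.isLt] at this
    exact Fin.ext this
  have h1ne : (1 : ZMod n) ≠ 0 := by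
    have : ((1:ℕ) : ZMod n) ≠ 0 := by
      rw [Ne, ZMod.natCast_eq_zero_iff]
      intro hdvd; exact absurd (Nat.le_of_dvd one_pos hdvd) (by omega)
    simpa using this
  have h2ne : (2 : ZMod n) ≠ 0 := by
    have : ((2:ℕ) : ZMod n) ≠ 0 := by
      rw [Ne, ZMod.natCast_eq_zero_iff]
      intro hdvd; exact absurd (Nat.le_of_dvd two_pos hdvd) (by omega)
    simpa using this
  have hrow : ∀ j : Fin n, ∑ k : Fin n, Mmat n (ξ:ℤ) j k * (v j * v k)
      = (1/2) * Real.cos (2 * π * ξ * (j:ℕ) / n) * (v j * v j)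
        + (1/4) * (v j * x ((j:ℕ) + 1)) + (1/4) * (v j * x ((j:ℕ) + (n-1))) := by
    intro j
    set a : Fin n := ⟨((j:ℕ) + 1) % n, Nat.mod_lt _ hn0⟩ with hadef
    set b : Fin n := ⟨((j:ℕ) + (n-1)) % n, Nat.mod_lt _ hn0⟩ with hbdef
    have hxa : x ((j:ℕ) + 1) = v a := hxv _
    have hxb : x ((j:ℕ) + (n-1)) = v b := hxv _
    have hea : ((a:ℕ) : ZMod n) = ((j:ℕ) : ZMod n) + 1 := by
      show ((((j:ℕ) + 1) % n : ℕ) : ZMod n) = _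
      rw [ZMod.natCast_mod]; push_cast; ring
    have hnm1 : (((n-1 : ℕ)) : ZMod n) = -1 := by
      have h1 : ((n-1 : ℕ) : ZMod n) + 1 = 0 := by
        have : ((n-1 : ℕ) : ZMod n) + ((1:ℕ) : ZMod n) = (((n-1) + 1 : ℕ) : ZMod n) := by
          push_cast; ring
        rw [show ((1:ℕ) : ZMod n) = 1 by push_cast; ring] at this
        rw [this, show (n-1) + 1 = n by omega, ZMod.natCast_self]
      linear_combination h1
    have heb : ((b:ℕ) : ZMod n) = ((j:ℕ) : ZMod n) - 1 := by
      show ((((j:ℕ) + (n-1)) % n : ℕ) : ZMod n) = _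
      rw [ZMod.natCast_mod]
      push_cast [hnm1]
      ring
    have haj : a ≠ j := by
      intro hcontra
      rw [hcontra] at hea
      exact h1ne (by linear_combination -hea)
    have hbj : b ≠ j := by
      intro hcontra
      rw [hcontra] at heb
      exact h1ne (by linear_combination heb)
    have hab : a ≠ b := by
      intro hcontra
      rw [hcontra, heb] at hea
      exact h2ne (by linear_combination -hea)
    have hiffa : ∀ k : Fin n, (((k:ℕ):ZMod n) = ((j:ℕ):ZMod n) + 1) ↔ k = a := by
      intro k
      constructor
      · intro hk; exact hinj k a (by rw [hea]; exact hk)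
      · intro hk; rw [hk, hea]
    have hiffb : ∀ k : Fin n, (((k:ℕ):ZMod n) = ((j:ℕ):ZMod n) - 1) ↔ k = b := by
      intro k
      constructor
      · intro hk; exact hinj k b (by rw [heb]; exact hk)
      · intro hk; rw [hk, heb]
    have hterm : ∀ k : Fin n, Mmat n (ξ:ℤ) j k * (v j * v k)
        = (if k = j then (1/2) * Real.cos (2 * π * ξ * (j:ℕ) / n) * (v j * v k) else 0)
          + ((if k = a then (1/4) * (v j * v k) else 0)
            + (if k = b then (1/4) * (v j * v k) else 0)) := by
      intro k
      show (if k = j then (1/2) * Real.cos (2 * Real.pi * ((ξ:ℤ) : ℝ) * ((j : ℕ) : ℝ) / (n : ℝ))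
          else if ((k : ℕ) : ZMod n) = ((j : ℕ) : ZMod n) + 1 ∨
              ((k : ℕ) : ZMod n) = ((j : ℕ) : ZMod n) - 1 then 1/4 else 0) * (v j * v k) = _
      by_cases h1 : k = j
      · subst h1
        rw [if_pos rfl, if_pos rfl, if_neg (fun hc => haj hc.symm), if_neg (fun hc => hbj hc.symm)]
        push_cast
        ring
      · rw [if_neg h1, if_neg h1]
        by_cases h2 : k = a
        · rw [if_pos (Or.inl ((hiffa k).mpr h2)), if_pos h2,
            if_neg (by rw [h2]; exact hab)]
          ring
        · by_cases h3 : k = b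
          · rw [if_pos (Or.inr ((hiffb k).mpr h3)), if_pos h3, if_neg h2]
            ring
          · have : ¬(((k : ℕ) : ZMod n) = ((j : ℕ) : ZMod n) + 1 ∨
                ((k : ℕ) : ZMod n) = ((j : ℕ) : ZMod n) - 1) := by
              rintro (hc | hc)
              · exact h2 ((hiffa k).mp hc)
              · exact h3 ((hiffb k).mp hc)
            rw [if_neg this, if_neg h2, if_neg h3]
            ring
    calc ∑ k : Fin n, Mmat n (ξ:ℤ) j k * (v j * v k)
        = ∑ k : Fin n,
            ((if k = j then (1/2) * Real.cos (2 * π * ξ * (j:ℕ) / n) * (v j * v k) else 0)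
            + ((if k = a then (1/4) * (v j * v k) else 0)
              + (if k = b then (1/4) * (v j * v k) else 0))) :=
          Finset.sum_congr rfl fun k _ => hterm k
      _ = (1/2) * Real.cos (2 * π * ξ * (j:ℕ) / n) * (v j * v j)
            + ((1/4) * (v j * v a) + (1/4) * (v j * v b)) := by
          rw [Finset.sum_add_distrib, Finset.sum_add_distrib,
            Finset.sum_ite_eq' univ j, Finset.sum_ite_eq' univ a, Finset.sum_ite_eq' univ b]
          simp
      _ = _ := by rw [hxa, hxb]; ring
  -- convert to a sum over `range n`
  have hS : ∑ j : Fin n, ∑ k : Fin n, Mmat n (ξ:ℤ) j k * (v j * v k)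
      = ∑ m ∈ range n, ((1/2) * Real.cos (2 * π * ξ * m / n) * (x m * x m)
          + (1/4) * (x m * x (m + 1)) + (1/4) * (x m * x (m + (n-1)))) := by
    rw [← Fin.sum_univ_eq_sum_range (fun m => (1/2) * Real.cos (2 * π * ξ * m / n) * (x m * x m)
          + (1/4) * (x m * x (m + 1)) + (1/4) * (x m * x (m + (n-1)))) n]
    refine Finset.sum_congr rfl fun j _ => ?_
    rw [hrow j, hxj j]
  rw [hS]
  -- shift identities
  have hsh1 : ∑ i ∈ range n, x (i+1)^2 = ∑ i ∈ range n, x i^2 := by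
    refine sum_shift 1 (fun m => x m ^ 2) (fun m => ?_)
    show x (m+n)^2 = x m^2
    rw [hxp]
  have hsh2 : ∑ i ∈ range n, x (i+(n-1)+1) * x (i+(n-1)) = ∑ i ∈ range n, x (i+1) * x i := by
    refine sum_shift (n-1) (fun m => x (m+1) * x m) (fun m => ?_)
    show x (m + n + 1) * x (m + n) = x (m + 1) * x m
    rw [show m + n + 1 = m + 1 + n by ring, hxp, hxp]
  have hGi : ∀ i : ℕ, x (i+(n-1)+1) * x (i+(n-1)) = x i * x (i+(n-1)) := by
    intro i
    rw [show i+(n-1)+1 = i + n by omega, hxp]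
  have keypt : ∀ i ∈ range n, ((1/2) * Real.cos (2 * π * ξ * i / n) * (x i * x i)
          + (1/4) * (x i * x (i + 1)) + (1/4) * (x i * x (i + (n-1)))) + x i ^ 2
      = Real.cos (π * ξ * i / n) ^ 2 * x i ^ 2 + (1/4) * (x i + x (i+1))^2
        + (1/4) * (x (i+(n-1)+1) * x (i+(n-1)) - x (i+1) * x i)
        + (1/4) * (x i^2 - x (i+1)^2) := by
    intro i _
    rw [hGi i]
    have hcs : Real.cos (π * ξ * i / n) ^ 2
        = 1/2 + Real.cos (2 * π * ξ * i / n) / 2 := by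
      rw [Real.cos_sq]
      congr 2
      ring
    rw [hcs]
    ring
  calc ∑ m ∈ range n, ((1/2) * Real.cos (2 * π * ξ * m / n) * (x m * x m)
          + (1/4) * (x m * x (m + 1)) + (1/4) * (x m * x (m + (n-1)))) + ∑ j ∈ range n, x j ^ 2
      = ∑ i ∈ range n, (((1/2) * Real.cos (2 * π * ξ * i / n) * (x i * x i)
          + (1/4) * (x i * x (i + 1)) + (1/4) * (x i * x (i + (n-1)))) + x i ^ 2) :=
        (Finset.sum_add_distrib).symm
    _ = ∑ i ∈ range n, (Real.cos (π * ξ * i / n) ^ 2 * x i ^ 2 + (1/4) * (x i + x (i+1))^2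
        + (1/4) * (x (i+(n-1)+1) * x (i+(n-1)) - x (i+1) * x i)
        + (1/4) * (x i^2 - x (i+1)^2)) := Finset.sum_congr rfl keypt
    _ = ∑ i ∈ range n, Real.cos (π * ξ * i / n) ^ 2 * x i ^ 2
        + (1/4) * ∑ i ∈ range n, (x i + x (i+1))^2
        + (1/4) * (∑ i ∈ range n, x (i+(n-1)+1) * x (i+(n-1)) - ∑ i ∈ range n, x (i+1) * x i)
        + (1/4) * (∑ i ∈ range n, x i^2 - ∑ i ∈ range n, x (i+1)^2) := by
        rw [Finset.sum_add_distrib, Finset.sum_add_distrib, Finset.sum_add_distrib,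
          ← Finset.mul_sum, ← Finset.mul_sum, ← Finset.mul_sum,
          Finset.sum_sub_distrib, Finset.sum_sub_distrib]
    _ = _ := by rw [hsh1, hsh2]; ring


end MmatAux

open MmatAux

set_option maxHeartbeats 2000000 in
/-- There is a universal constant `θ > 0` such that for every odd `n ≥ 3` and
`1 ≤ ξ ≤ n / log n`, the smallest eigenvalue of `M(ξ)` is at least
`-1 + θ·(ξ/n)^{4/3}`; equivalently every eigenvalue `β` of `M(ξ)` satisfies
`β ≥ -1 + θ·(ξ/n)^{4/3}`. -/
theorem Mmat_bottom_eigenvalue_bound_small_xi :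
    ∃ θ : ℝ, 0 < θ ∧
      ∀ n : ℕ, Odd n → 3 ≤ n → ∀ ξ : ℕ, 1 ≤ ξ → (ξ : ℝ) ≤ (n : ℝ) / Real.log n →
        ∀ β ∈ spectrum ℝ (Mmat n (ξ : ℤ)),
          -1 + θ * ((ξ : ℝ) / (n : ℝ)) ^ ((4 : ℝ) / 3) ≤ β := by
  refine ⟨1/100000000, by norm_num, ?_⟩
  intro n hodd hn3 ξ hξ1 hξlog β hβ
  have hn0 : 0 < n := by omega
  have hn0R : (0:ℝ) < n := by exact_mod_cast hn0
  -- log n ≥ 1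
  have hlog1 : (1:ℝ) ≤ Real.log n := by
    rw [Real.le_log_iff_exp_le hn0R]
    calc Real.exp 1 ≤ 2.7182818286 := Real.exp_one_lt_d9.le
      _ ≤ (n:ℝ) := by
        have : (3:ℝ) ≤ (n:ℝ) := by exact_mod_cast hn3
        linarith
  -- the ratio t
  set t : ℝ := (ξ:ℝ) / n with htdef
  have ht0 : 0 < t := by
    apply div_pos _ hn0R
    exact_mod_cast hξ1
  have htlog : t ≤ 1 / Real.log n := by
    rw [htdef, div_le_div_iff₀ hn0R (by linarith)]
    calc (ξ:ℝ) * Real.log n ≤ ((n:ℝ) / Real.log n) * Real.log n :=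
        mul_le_mul_of_nonneg_right hξlog (by linarith)
      _ = (n:ℝ) := by field_simp
      _ = 1 * (n:ℝ) := by ring
  have ht1 : t ≤ 1 := le_trans htlog (by rw [div_le_one (by linarith)]; exact hlog1)
  -- extract an eigenvector
  rw [spectrum.mem_iff] at hβ
  rw [Matrix.isUnit_iff_isUnit_det, isUnit_iff_ne_zero, not_not] at hβ
  obtain ⟨v, hv0, hv⟩ := (Matrix.exists_mulVec_eq_zero_iff).mpr hβ
  have hMv : (Mmat n (ξ:ℤ)).mulVec v = β • v := by
    have h1 : (algebraMap ℝ (Matrix (Fin n) (Fin n) ℝ) β - Mmat n (ξ:ℤ)).mulVec v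
        = (algebraMap ℝ (Matrix (Fin n) (Fin n) ℝ) β).mulVec v
          - (Mmat n (ξ:ℤ)).mulVec v := Matrix.sub_mulVec _ _ _
    rw [hv] at h1
    have h2 : (algebraMap ℝ (Matrix (Fin n) (Fin n) ℝ) β).mulVec v = β • v := by
      rw [Algebra.algebraMap_eq_smul_one, Matrix.smul_mulVec, Matrix.one_mulVec]
    rw [h2] at h1
    exact (eq_of_sub_eq_zero h1.symm).symm
  -- periodized vector
  set x : ℕ → ℝ := fun m => v ⟨m % n, Nat.mod_lt _ hn0⟩ with hxdef
  have hxv : ∀ m : ℕ, x m = v ⟨m % n, Nat.mod_lt _ (by omega)⟩ := fun m => rfl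
  have hxp : ∀ m, x (m + n) = x m := by
    intro m
    show v _ = v _
    congr 1
    exact Fin.ext (by simp [Nat.add_mod_right])
  have hxj : ∀ j : Fin n, x (j : ℕ) = v j := by
    intro j
    show v _ = v _
    congr 1
    exact Fin.ext (by simp [Nat.mod_eq_of_lt j.isLt])
  -- quadratic form equals β times the squared norm
  have hquad : ∑ j : Fin n, ∑ k : Fin n, Mmat n (ξ:ℤ) j k * (v j * v k)
      = β * ∑ j : Fin n, v j ^ 2 := by
    have h3 : ∀ j : Fin n, ∑ k : Fin n, Mmat n (ξ:ℤ) j k * (v j * v k)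
        = v j * ((Mmat n (ξ:ℤ)).mulVec v j) := by
      intro j
      simp only [Matrix.mulVec, dotProduct, Finset.mul_sum]
      exact Finset.sum_congr rfl fun k _ => by ring
    calc ∑ j : Fin n, ∑ k : Fin n, Mmat n (ξ:ℤ) j k * (v j * v k)
        = ∑ j : Fin n, v j * ((Mmat n (ξ:ℤ)).mulVec v j) :=
          Finset.sum_congr rfl fun j _ => h3 j
      _ = ∑ j : Fin n, v j * (β * v j) := by
          rw [hMv]
          exact Finset.sum_congr rfl fun j _ => by rw [Pi.smul_apply, smul_eq_mul]
      _ = β * ∑ j : Fin n, v j ^ 2 := by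
          rw [Finset.mul_sum]
          exact Finset.sum_congr rfl fun j _ => by ring
  have hNpos : 0 < ∑ j : Fin n, v j ^ 2 := by
    obtain ⟨j, hj⟩ := Function.ne_iff.mp hv0
    exact Finset.sum_pos' (fun i _ => sq_nonneg _)
      ⟨j, Finset.mem_univ j, (sq_nonneg _).lt_of_ne (Ne.symm (pow_ne_zero 2 hj))⟩
  have hNeq : ∑ j ∈ range n, x j ^ 2 = ∑ j : Fin n, v j ^ 2 := by
    rw [← Fin.sum_univ_eq_sum_range (fun m => x m ^ 2) n]
    exact Finset.sum_congr rfl fun j _ => by rw [hxj j]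
  set N : ℝ := ∑ j ∈ range n, x j ^ 2 with hNdef
  have hNpos' : 0 < N := by rw [hNeq]; exact hNpos
  set P : ℝ := ∑ j ∈ range n, Real.cos (π * ξ * j / n) ^ 2 * x j ^ 2 with hPdef
  set D4 : ℝ := (1/4) * ∑ j ∈ range n, (x j + x (j + 1)) ^ 2 with hD4def
  have hP0 : 0 ≤ P := Finset.sum_nonneg fun j _ => by positivity
  have hD40 : 0 ≤ D4 := by
    rw [hD4def]
    have : 0 ≤ ∑ j ∈ range n, (x j + x (j + 1)) ^ 2 :=
      Finset.sum_nonneg fun j _ => sq_nonneg _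
    linarith
  have heq : β * N + N = P + D4 := by
    have hform := form_eq hn3 hodd ξ v x hxv
    rw [hquad, ← hNeq] at hform
    exact hform
  -- the potential function
  set V : ℕ → ℝ := fun j => Real.cos (π * ξ * j / n) ^ 2 with hVdef
  have hV : ∀ j : ℕ, V j = Real.cos (π * (t * j)) ^ 2 := by
    intro j
    rw [hVdef]
    show Real.cos (π * ξ * j / n) ^ 2 = _
    rw [show π * (t * (j:ℝ)) = π * ξ * j / n by rw [htdef]; ring]
  have hVp : ∀ j, V (j + n) = V j := by
    intro j
    show Real.cos (π * ξ * ((j + n : ℕ):ℝ) / n) ^ 2 = Real.cos (π * ξ * (j:ℝ) / n) ^ 2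
    have harg : π * ξ * ((j + n : ℕ):ℝ) / n = π * ξ * (j:ℝ) / n + (ξ:ℝ) * π := by
      push_cast
      field_simp
    have hc2 : Real.cos ((ξ:ℝ) * π) ^ 2 = 1 := by
      have hpyth := Real.sin_sq_add_cos_sq ((ξ:ℝ) * π)
      rw [Real.sin_nat_mul_pi] at hpyth
      nlinarith [hpyth]
    rw [harg, Real.cos_add, Real.sin_nat_mul_pi, mul_zero, sub_zero, mul_pow, hc2, mul_one]
  -- the exponent
  set u : ℝ := t ^ ((4:ℝ)/3) with hudef
  have hu0 : 0 ≤ u := (Real.rpow_pos_of_pos ht0 _).le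
  have hu1 : u ≤ 1 := Real.rpow_le_one ht0.le ht1 (by norm_num)
  have hgoalN : (-1 + (1/100000000) * u) * N ≤ β * N → -1 + (1/100000000) * u ≤ β := by
    intro hh
    exact le_of_mul_le_mul_right (by linarith [hh]) hNpos'
  by_cases hts : t ≤ 1/8
  · -- small t : chaining bound
    have hsc : N ≤ 64 * t ^ (-(4:ℝ)/3) * (P + D4) := small_case x hxp ht0 hts V hV hVp
    have hmul : t ^ (-(4:ℝ)/3) * u = 1 := by
      rw [hudef, ← Real.rpow_add ht0]; norm_num
    have hQ : u/64 * N ≤ P + D4 := by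
      have h5 := mul_le_mul_of_nonneg_left hsc
        (show (0:ℝ) ≤ u/64 by positivity)
      have e : u/64 * (64 * t ^ (-(4:ℝ)/3) * (P + D4))
          = (t ^ (-(4:ℝ)/3) * u) * (P + D4) := by ring
      rw [e, hmul, one_mul] at h5
      exact h5
    apply hgoalN
    nlinarith [heq, hQ, hNpos'.le, mul_nonneg hu0 hNpos'.le]
  · -- large t : odd cycle bound, n is bounded
    push_neg at hts
    have hoc : N ≤ (n:ℝ)^2 * D4 := odd_case hodd x hxp
    have hlog8 : Real.log n < 8 := by
      by_contra hcon
      push_neg at hcon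
      have : (1:ℝ)/Real.log n ≤ 1/8 := by
        apply one_div_le_one_div_of_le <;> linarith
      linarith
    have hn3000 : (n:ℝ) < 3000 := by
      have h6 : (n:ℝ) < Real.exp 8 := by
        calc (n:ℝ) = Real.exp (Real.log n) := (Real.exp_log hn0R).symm
          _ < Real.exp 8 := Real.exp_lt_exp.mpr hlog8
      have h7 : Real.exp 8 < 3000 := by
        have h8 : Real.exp (8:ℕ) = Real.exp 1 ^ 8 := (Real.exp_one_pow 8).symm
        have h9 : Real.exp 1 ^ 8 ≤ (2.7182818286:ℝ) ^ 8 :=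
          pow_le_pow_left₀ (Real.exp_pos 1).le Real.exp_one_lt_d9.le 8
        have h10 : ((8:ℕ):ℝ) = (8:ℝ) := by norm_num
        rw [h10] at h8
        have : (2.7182818286:ℝ) ^ 8 < 3000 := by norm_num
        linarith
      linarith
    have hθn : (1/100000000) * (n:ℝ)^2 ≤ 1 := by nlinarith [hn0R]
    have hθN : (1/100000000) * N ≤ D4 := by
      have h11 := mul_le_mul_of_nonneg_left hoc (show (0:ℝ) ≤ 1/100000000 by norm_num)
      have h12 : (1/100000000) * ((n:ℝ)^2 * D4) ≤ 1 * D4 := by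
        have := mul_le_mul_of_nonneg_right hθn hD40
        calc (1/100000000) * ((n:ℝ)^2 * D4) = (1/100000000) * (n:ℝ)^2 * D4 := by ring
          _ ≤ 1 * D4 := this
      linarith
    apply hgoalN
    nlinarith [heq, hθN, hP0, hNpos'.le,
      mul_nonneg (mul_nonneg (show (0:ℝ) ≤ 1/100000000 by norm_num)
        (sub_nonneg.mpr hu1)) hNpos'.le]
end
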